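/- Assume r*m/2 > 1 and r*c ≤ 1. Define φ : ℤ → ℝ by φ_i = 1 for i ≤ 0 and φ_i = 0 for i ≥ 1. Then (G φ)_i = φ_{i-1} for every i ∈ ℤ; consequently (G^{(t)} φ)_i = φ_{i-t} for every t ≥ 0, i.e. φ is a traveling front of speed one, for every critical density c with r*c ≤ 1. -/

import Mathlib

/-- The piecewise linear reproduction function `g(u) = r u` for `u < c`, `g(u) = 1` for `u ≥ c`. -/
noncomputable def g (r c u : ℝ) : ℝ := if u < c then r * u else 1

/-- The generational map `G`: migration followed by reproduction. -/
noncomputable def G (r c m : ℝ) (u : ℤ → ℝ) : ℤ → ℝ :=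
  fun i => g r c (m / 2 * u (i - 1) + (1 - m) * u i + m / 2 * u (i + 1))

/-!
After migration the step front takes the values `1`, `1 - m/2`, `m/2`, `0` at the sites
`i ≤ -1`, `0`, `1`, `i ≥ 2`. Since `r c ≤ 1 < r m / 2` forces `c < m/2 < 1 - m/2`, reproduction
sends the first three values to `1` and keeps `0`, so one generation moves the front one site
to the right. As `G` commutes with translations, the iterates follow by induction.
-/

section Reproduction

variable {r c u : ℝ}

theorem g_of_le (h : c ≤ u) : g r c u = 1 := if_neg h.not_gt

theorem g_zero (hc : 0 < c) : g r c 0 = 0 := by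
  simp [g, hc]

end Reproduction

theorem G_translate (r c m : ℝ) (u : ℤ → ℝ) (k i : ℤ) :
    G r c m (fun j => u (j - k)) i = G r c m u (i - k) := by
  simp only [G, sub_right_comm i 1 k, add_sub_right_comm i 1 k]

theorem iterate_G_of_G_eq_shift {r c m : ℝ} {u : ℤ → ℝ} (h : ∀ i, G r c m u i = u (i - 1))
    (t : ℕ) (i : ℤ) : (G r c m)^[t] u i = u (i - t) := by
  induction t generalizing i with
  | zero => simp
  | succ t ih =>
    have hiter : (G r c m)^[t] u = fun j => u (j - t) := funext ih
    rw [Function.iterate_succ_apply', hiter, G_translate, h]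
    push_cast
    congr 1
    ring

theorem G_step_front {r c m : ℝ} (hc : 0 < c) (hcm : c < m / 2) (hm1 : m < 1)
    {φ : ℤ → ℝ} (hφ : ∀ i : ℤ, φ i = if i ≤ 0 then 1 else 0) (i : ℤ) :
    G r c m φ i = φ (i - 1) := by
  simp only [G, hφ]
  rcases (show i ≤ -1 ∨ i = 0 ∨ i = 1 ∨ 2 ≤ i by omega) with h | rfl | rfl | h
  · rw [if_pos (by omega), if_pos (by omega), if_pos (by omega)]
    exact g_of_le (by linarith)
  · norm_num
    exact g_of_le (by linarith)
  · norm_num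
    exact g_of_le (by linarith)
  · rw [if_neg (by omega), if_neg (by omega), if_neg (by omega)]
    simpa using g_zero hc

theorem stmt_11_general (r c m : ℝ) (hr : 0 < r) (hc : 0 < c) (hm1 : m < 1)
    (hrm : 1 < r * m / 2) (hrc : r * c ≤ 1)
    (φ : ℤ → ℝ) (hφ : ∀ i : ℤ, φ i = if i ≤ 0 then 1 else 0) :
    (∀ i : ℤ, G r c m φ i = φ (i - 1)) ∧
      ∀ t : ℕ, ∀ i : ℤ, (G r c m)^[t] φ i = φ (i - t) := by
  have hcm : c < m / 2 := lt_of_mul_lt_mul_left (by linarith) hr.le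
  have hstep : ∀ i, G r c m φ i = φ (i - 1) := G_step_front hc hcm hm1 hφ
  exact ⟨hstep, iterate_G_of_G_eq_shift hstep⟩

theorem stmt_11 (r c m : ℝ) (hr : 0 < r) (hc : 0 < c) (hm0 : 0 < m) (hm1 : m < 1)
    (hrm : 1 < r * m / 2) (hrc : r * c ≤ 1)
    (φ : ℤ → ℝ) (hφ : ∀ i : ℤ, φ i = if i ≤ 0 then 1 else 0) :
    (∀ i : ℤ, G r c m φ i = φ (i - 1)) ∧
      ∀ t : ℕ, ∀ i : ℤ, (G r c m)^[t] φ i = φ (i - t) :=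
  stmt_11_general r c m hr hc hm1 hrm hrc φ hφ
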